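/- arXiv:math/0304241 — 2 statements merged into one kernel-verified Lean document; each statement's English description precedes it below -/
import Mathlib

section
/- Let $k$ have characteristic $0$, $V$ a $2m$-dimensional $k$-vector space, and $A: \Lambda^\bullet V^* \to \Lambda^\bullet V^*$ the contraction operator with $\alpha = \sum_{i=0}^{m-1} e_i \wedge e_{m+i}$. Then for every $0 \le i \le m$, the iterated contraction $A^i: \Lambda^{m+i}V^* \to \Lambda^{m-i}V^*$ is a linear isomorphism. -/
set_option synthInstance.maxHeartbeats 1000000
set_option maxHeartbeats 1000000

/-!
STATEMENT 13: `char k = 0`, `dim V = 2m` (basis indexed by `Fin m ⊕ Fin m`), and `A` the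
contraction operator on `Λ^• V^*` with `α = ∑ eᵢ ∧ e_{m+i}`.  Then for every `0 ≤ i ≤ m` the
iterated contraction `A^i : Λ^{m+i} V^* → Λ^{m-i} V^*` is a linear isomorphism; we express
this by saying that the `i`-th iterate of `A` restricts to a bijection from the submodule
`⋀^{m+i} V^*` onto the submodule `⋀^{m-i} V^*` (`Set.BijOn`).
-/

open Module CliffordAlgebra

variable (k V : Type) [Field k] [AddCommGroup V] [Module k V]

open Module CliffordAlgebra

variable (k V : Type) [Field k] [AddCommGroup V] [Module k V]

/-- Contraction of `Λ^• V^*` with the vector `v ∈ V`. -/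
noncomputable def ctr (v : V) :
    ExteriorAlgebra k (Module.Dual k V) →ₗ[k] ExteriorAlgebra k (Module.Dual k V) :=
  contractLeft (Q := (0 : QuadraticForm k (Module.Dual k V))) (Module.Dual.eval k V v)

variable {m : ℕ} (e : Basis (Fin m ⊕ Fin m) k V)

/-- `A`: contraction with `α = ∑ eᵢ ∧ e_{m+i}`. -/
noncomputable def opA :
    ExteriorAlgebra k (Module.Dual k V) →ₗ[k] ExteriorAlgebra k (Module.Dual k V) :=
  ∑ i : Fin m, (ctr k V (e (Sum.inr i))) ∘ₗ (ctr k V (e (Sum.inl i)))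

/-- `β = ∑ Xᵢ ∧ X_{m+i} ∈ Λ² V^*`. -/
noncomputable def elβ : ExteriorAlgebra k (Module.Dual k V) :=
  ∑ i : Fin m, (ExteriorAlgebra.ι k (M := Module.Dual k V) (e.dualBasis (Sum.inl i))) *
    (ExteriorAlgebra.ι k (M := Module.Dual k V) (e.dualBasis (Sum.inr i)))

/-- `B`: exterior (left) multiplication with `β`. -/
noncomputable def opB :
    ExteriorAlgebra k (Module.Dual k V) →ₗ[k] ExteriorAlgebra k (Module.Dual k V) :=
  LinearMap.mulLeft k (elβ k V e)

/-- `C = [A, B]`. -/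
noncomputable def opC :
    ExteriorAlgebra k (Module.Dual k V) →ₗ[k] ExteriorAlgebra k (Module.Dual k V) :=
  (opA k V e) ∘ₗ (opB k V e) - (opB k V e) ∘ₗ (opA k V e)

/-! ### Auxiliary development -/

section Aux

local notation "Λ" => ExteriorAlgebra k (Module.Dual k V)
local notation "ιι" => ExteriorAlgebra.ι k (M := Module.Dual k V)
local notation "Λp" n => (⋀[k]^(n) (Module.Dual k V) : Submodule k (ExteriorAlgebra k (Module.Dual k V)))

lemma ctr_ι_mul (v : V) (g : Module.Dual k V) (x : Λ) :
    ctr k V v (ιι g * x) = g v • x - ιι g * ctr k V v x := by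
  have := contractLeft_ι_mul (Q := (0 : QuadraticForm k (Module.Dual k V)))
    (Module.Dual.eval k V v) g x
  simpa [ctr] using this

lemma ctr_one (v : V) : ctr k V v 1 = 0 :=
  contractLeft_one (Q := (0 : QuadraticForm k (Module.Dual k V))) _

lemma ctr_algebraMap (v : V) (r : k) : ctr k V v (algebraMap k Λ r) = 0 :=
  contractLeft_algebraMap (Q := (0 : QuadraticForm k (Module.Dual k V))) (Module.Dual.eval k V v) r

lemma dual_expand (g : Module.Dual k V) :
    ∑ a : Fin m ⊕ Fin m, g (e a) • e.dualBasis a = g := by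
  conv_rhs => rw [← e.dualBasis.sum_repr g]
  simp [Basis.dualBasis_repr]

lemma dualBasis_val (a b : Fin m ⊕ Fin m) :
    e.dualBasis a (e b) = if b = a then 1 else 0 := by
  rw [Basis.dualBasis_apply_self]

lemma ι_swap (g h : Module.Dual k V) (x : Λ) :
    ιι g * (ιι h * x) = -(ιι h * (ιι g * x)) := by
  have h2 : ιι g * ιι h = - (ιι h * ιι g) := by
    have := ExteriorAlgebra.ι_add_mul_swap (R := k) g h
    rw [add_eq_zero_iff_eq_neg] at this
    exact this
  rw [← mul_assoc, h2, ← mul_assoc, neg_mul]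

/-- The Euler (degree-counting) operator. -/
noncomputable def opE : ExteriorAlgebra k (Module.Dual k V) →ₗ[k] ExteriorAlgebra k (Module.Dual k V) :=
  ∑ a : Fin m ⊕ Fin m, (LinearMap.mulLeft k (ιι (e.dualBasis a))) ∘ₗ ctr k V (e a)

lemma opE_apply (x : Λ) :
    opE k V e x = ∑ a : Fin m ⊕ Fin m, ιι (e.dualBasis a) * ctr k V (e a) x := by
  simp [opE]

lemma opE_mul (g : Module.Dual k V) (x : Λ) :
    opE k V e (ιι g * x) = ιι g * x + ιι g * opE k V e x := by
  rw [opE_apply]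
  have step : ∀ a : Fin m ⊕ Fin m, ιι (e.dualBasis a) * ctr k V (e a) (ιι g * x)
      = g (e a) • (ιι (e.dualBasis a) * x) + ιι g * (ιι (e.dualBasis a) * ctr k V (e a) x) := by
    intro a
    rw [ctr_ι_mul, mul_sub, ι_swap]
    rw [mul_smul_comm, sub_neg_eq_add]
  rw [Finset.sum_congr rfl (fun a _ => step a), Finset.sum_add_distrib, ← Finset.mul_sum,
    ← opE_apply]
  congr 1
  have : ∑ a : Fin m ⊕ Fin m, g (e a) • (ιι (e.dualBasis a) * x)
      = (ιι (∑ a : Fin m ⊕ Fin m, g (e a) • e.dualBasis a)) * x := by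
    rw [map_sum, Finset.sum_mul]
    simp [smul_mul_assoc]
  rw [this, dual_expand]

lemma opE_ιMulti (n : ℕ) (f : Fin n → Module.Dual k V) :
    opE k V e (ExteriorAlgebra.ιMulti k n f) = n • ExteriorAlgebra.ιMulti k n f := by
  induction n with
  | zero =>
    rw [ExteriorAlgebra.ιMulti_zero_apply, opE_apply]
    simp [ctr_one]
  | succ n ih =>
    rw [ExteriorAlgebra.ιMulti_succ_apply, opE_mul, ih _]
    rw [mul_smul_comm, succ_nsmul']

lemma opE_eigen (n : ℕ) (x : Λ) (hx : x ∈ Λp n) : opE k V e x = n • x := by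
  rw [← ExteriorAlgebra.ιMulti_span_fixedDegree] at hx
  induction hx using Submodule.span_induction with
  | mem y hy => obtain ⟨f, rfl⟩ := hy; exact opE_ιMulti k V e n f
  | zero => simp
  | add y z _ _ hy hz => rw [map_add, hy, hz, smul_add]
  | smul c y _ hy => rw [map_smul, hy, smul_comm]

lemma pair_comm (i j : Fin m) (x : Λ) :
    ctr k V (e (.inr i)) (ctr k V (e (.inl i))
      (ιι (e.dualBasis (.inl j)) * (ιι (e.dualBasis (.inr j)) * x)))
    = (if i = j then (1:k) else 0) •
        (x - ιι (e.dualBasis (.inl i)) * ctr k V (e (.inl i)) x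
           - ιι (e.dualBasis (.inr i)) * ctr k V (e (.inr i)) x)
      + ιι (e.dualBasis (.inl j)) * (ιι (e.dualBasis (.inr j)) *
          ctr k V (e (.inr i)) (ctr k V (e (.inl i)) x)) := by
  by_cases hij : i = j
  · subst hij
    simp only [ctr_ι_mul, dualBasis_val, if_pos rfl, reduceCtorEq, if_false, if_true,
      Sum.inl.injEq, Sum.inr.injEq, one_smul, zero_smul, map_sub, map_smul, map_neg, neg_smul,
      smul_neg, neg_sub, mul_sub, smul_sub, sub_zero, zero_sub, mul_neg, neg_neg, mul_smul_comm]
    abel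
  · have h1 : ((Sum.inl i : Fin m ⊕ Fin m) = Sum.inl j) = False := by simp [hij]
    have h2 : ((Sum.inr i : Fin m ⊕ Fin m) = Sum.inr j) = False := by simp [hij]
    simp only [ctr_ι_mul, dualBasis_val, h1, h2, reduceCtorEq, if_false, if_neg hij,
      one_smul, zero_smul, map_sub, map_smul, map_neg, neg_smul,
      smul_neg, neg_sub, mul_sub, smul_sub, sub_zero, zero_sub, mul_neg, neg_neg, mul_smul_comm]
    abel

lemma opC_eq (x : Λ) : opC k V e x = m • x - opE k V e x := by
  have hB : ∀ y : Λ, opB k V e y = ∑ j : Fin m,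
      ιι (e.dualBasis (.inl j)) * (ιι (e.dualBasis (.inr j)) * y) := by
    intro y
    simp [opB, elβ, Finset.sum_mul, mul_assoc]
  have hA : ∀ y : Λ, opA k V e y = ∑ i : Fin m,
      ctr k V (e (.inr i)) (ctr k V (e (.inl i)) y) := by
    intro y
    simp [opA]
  have key : opA k V e (opB k V e x)
      = (∑ i : Fin m, (x - ιι (e.dualBasis (.inl i)) * ctr k V (e (.inl i)) x
           - ιι (e.dualBasis (.inr i)) * ctr k V (e (.inr i)) x))
        + opB k V e (opA k V e x) := by
    rw [hB, hA]
    simp only [map_sum]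
    have : ∀ i : Fin m, ∑ j : Fin m, ctr k V (e (.inr i)) (ctr k V (e (.inl i))
        (ιι (e.dualBasis (.inl j)) * (ιι (e.dualBasis (.inr j)) * x)))
        = (x - ιι (e.dualBasis (.inl i)) * ctr k V (e (.inl i)) x
           - ιι (e.dualBasis (.inr i)) * ctr k V (e (.inr i)) x)
          + ∑ j : Fin m, ιι (e.dualBasis (.inl j)) * (ιι (e.dualBasis (.inr j)) *
            ctr k V (e (.inr i)) (ctr k V (e (.inl i)) x)) := by
      intro i
      rw [Finset.sum_congr rfl (fun j _ => pair_comm k V e i j x), Finset.sum_add_distrib]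
      congr 1
      rw [Finset.sum_congr rfl (fun j _ => by rw [ite_smul, one_smul, zero_smul]),
        Finset.sum_ite_eq Finset.univ i]
      simp
    rw [Finset.sum_congr rfl (fun i _ => this i), Finset.sum_add_distrib]
    congr 1
    rw [hA x, hB, Finset.sum_comm]
    refine Finset.sum_congr rfl fun j _ => ?_
    rw [← Finset.mul_sum, ← Finset.mul_sum]
  have hsum : (∑ i : Fin m, (x - ιι (e.dualBasis (.inl i)) * ctr k V (e (.inl i)) x
           - ιι (e.dualBasis (.inr i)) * ctr k V (e (.inr i)) x))
      = m • x - opE k V e x := by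
    rw [opE_apply, Fintype.sum_sum_type]
    simp only [Finset.sum_sub_distrib, Finset.sum_const, Finset.card_univ, Fintype.card_fin]
    abel
  have : opC k V e x = opA k V e (opB k V e x) - opB k V e (opA k V e x) := rfl
  rw [this, key, hsum]
  abel

lemma opC_eigen (n : ℕ) (x : Λ) (hx : x ∈ Λp n) :
    opC k V e x = ((m : ℤ) - (n : ℤ)) • x := by
  rw [opC_eq, opE_eigen k V e n x hx, sub_smul, natCast_zsmul, natCast_zsmul]

/-! ### Degree shifts -/

lemma exteriorPower_zero_eq : (Λp 0) = (1 : Submodule k Λ) := pow_zero _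

lemma one_mem_zero : (1 : Λ) ∈ Λp 0 := by
  rw [exteriorPower_zero_eq]
  exact Submodule.mem_one.mpr ⟨1, map_one _⟩

lemma ctr_ιMulti_mem (v : V) (n : ℕ) (f : Fin (n+1) → Module.Dual k V) :
    ctr k V v (ExteriorAlgebra.ιMulti k (n+1) f) ∈ Λp n := by
  induction n with
  | zero =>
    rw [ExteriorAlgebra.ιMulti_succ_apply, ExteriorAlgebra.ιMulti_zero_apply, ctr_ι_mul,
      ctr_one, mul_zero, sub_zero]
    exact Submodule.smul_mem _ _ (one_mem_zero k V)
  | succ n ih =>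
    rw [ExteriorAlgebra.ιMulti_succ_apply, ctr_ι_mul]
    refine sub_mem (Submodule.smul_mem _ _ ?_) ?_
    · exact ExteriorAlgebra.ιMulti_range k (n+1) ⟨_, rfl⟩
    · have h1 : ιι (f 0) ∈ LinearMap.range (ExteriorAlgebra.ι k (M := Module.Dual k V)) :=
        ⟨f 0, rfl⟩
      have h2 := ih (Matrix.vecTail f)
      have := Submodule.mul_mem_mul h1 h2
      rwa [← pow_succ'] at this

lemma ctr_mem (v : V) (n : ℕ) (x : Λ) (hx : x ∈ Λp (n+1)) : ctr k V v x ∈ Λp n := by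
  rw [← ExteriorAlgebra.ιMulti_span_fixedDegree] at hx
  induction hx using Submodule.span_induction with
  | mem y hy => obtain ⟨f, rfl⟩ := hy; exact ctr_ιMulti_mem k V v n f
  | zero => simp
  | add y z _ _ hy hz => rw [map_add]; exact add_mem hy hz
  | smul c y _ hy => rw [map_smul]; exact Submodule.smul_mem _ c hy

lemma ctr_mem_zero (v : V) (x : Λ) (hx : x ∈ Λp 0) : ctr k V v x = 0 := by
  rw [exteriorPower_zero_eq] at hx
  obtain ⟨r, rfl⟩ := Submodule.mem_one.mp hx
  exact ctr_algebraMap k V v r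

lemma opA_apply (x : Λ) :
    opA k V e x = ∑ i : Fin m, ctr k V (e (.inr i)) (ctr k V (e (.inl i)) x) := by
  simp [opA]

lemma opA_mem (n : ℕ) (x : Λ) (hx : x ∈ Λp (n+2)) : opA k V e x ∈ Λp n := by
  rw [opA_apply]
  exact Submodule.sum_mem _ fun i _ =>
    ctr_mem k V _ n _ (ctr_mem k V _ (n+1) x hx)

lemma opA_low (n : ℕ) (hn : n ≤ 1) (x : Λ) (hx : x ∈ Λp n) : opA k V e x = 0 := by
  rw [opA_apply]
  refine Finset.sum_eq_zero fun i _ => ?_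
  interval_cases n
  · rw [ctr_mem_zero k V _ x hx, map_zero]
  · exact ctr_mem_zero k V _ _ (ctr_mem k V _ 0 x hx)

lemma elβ_mem : elβ k V e ∈ Λp 2 := by
  rw [elβ]
  refine Submodule.sum_mem _ fun i _ => ?_
  have h1 := LinearMap.mem_range_self (ExteriorAlgebra.ι k (M := Module.Dual k V))
    (e.dualBasis (Sum.inl i))
  have h2 := LinearMap.mem_range_self (ExteriorAlgebra.ι k (M := Module.Dual k V))
    (e.dualBasis (Sum.inr i))
  have := Submodule.mul_mem_mul h1 h2
  rwa [← pow_two] at this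

lemma opB_mem (n : ℕ) (x : Λ) (hx : x ∈ Λp n) : opB k V e x ∈ Λp (n+2) := by
  have : opB k V e x = elβ k V e * x := rfl
  rw [this]
  have := Submodule.mul_mem_mul (elβ_mem k V e) hx
  rwa [← pow_add, add_comm 2 n] at this

lemma opA_pow_mem (i n : ℕ) (x : Λ) (hx : x ∈ Λp (n+2*i)) :
    ((opA k V e)^i) x ∈ Λp n := by
  induction i generalizing n x with
  | zero => simpa using hx
  | succ i ih =>
    rw [pow_succ, Module.End.mul_apply]
    have hx' : x ∈ Λp ((n + 2*i) + 2) := by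
      have hh : n + 2*(i+1) = (n + 2*i) + 2 := by ring
      rwa [hh] at hx
    exact ih n _ (opA_mem k V e (n + 2*i) x hx')

lemma opB_pow_mem' (i n : ℕ) (x : Λ) (hx : x ∈ Λp n) :
    ((opB k V e)^i) x ∈ Λp (n+2*i) := by
  induction i generalizing n x with
  | zero => simpa using hx
  | succ i ih =>
    rw [pow_succ, Module.End.mul_apply]
    have := ih (n+2) _ (opB_mem k V e n x hx)
    have hh : n + 2 + 2*i = n + 2*(i+1) := by ring
    rwa [hh] at this

lemma opB_pow_mem (i n : ℕ) (x : Λ) (hx : x ∈ Λp n) :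
    ((opB k V e)^i) x ∈ Λp (n+2*i) := opB_pow_mem' k V e i n x hx

lemma opC_apply (x : Λ) :
    opC k V e x = opA k V e (opB k V e x) - opB k V e (opA k V e x) := rfl

lemma base_identity (p : ℕ) (x : Λ) (hx : x ∈ Λp p) :
    opA k V e (opB k V e x) = opB k V e (opA k V e x) + ((m:ℤ) - (p:ℤ)) • x := by
  have h := opC_eigen k V e p x hx
  rw [opC_apply] at h
  rw [eq_add_of_sub_eq h]
  abel

/-! ### sl₂-style commutation identities -/

lemma pow_apply_succ (f : Λ →ₗ[k] Λ) (n : ℕ) (x : Λ) :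
    (f^(n+1)) x = (f^n) (f x) := by
  rw [pow_succ, Module.End.mul_apply]

lemma commAB (j p : ℕ) (x : Λ) (hx : x ∈ Λp p) :
    opA k V e (((opB k V e)^(j+1)) x)
      = ((opB k V e)^(j+1)) (opA k V e x)
        + (((j:ℤ)+1) * ((m:ℤ) - (p:ℤ) - (j:ℤ))) • ((opB k V e)^j) x := by
  induction j generalizing p x with
  | zero =>
    rw [pow_one, pow_zero, Module.End.one_apply, base_identity k V e p x hx]
    congr 1
    push_cast
    ring
  | succ j ih =>
    have hBx := opB_mem k V e p x hx
    have ihh := ih (p+2) (opB k V e x) hBx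
    rw [pow_apply_succ k V (opB k V e) (j+1) x, ihh,
      base_identity k V e p x hx, map_add, map_zsmul,
      ← pow_apply_succ k V (opB k V e) (j+1) (opA k V e x),
      ← pow_apply_succ k V (opB k V e) j x,
      add_assoc, ← add_smul]
    congr 1
    push_cast
    ring

lemma commBA (j q : ℕ) (x : Λ) (hx : x ∈ Λp q) :
    opB k V e (((opA k V e)^(j+1)) x)
      = ((opA k V e)^(j+1)) (opB k V e x)
        + (((j:ℤ)+1) * ((q:ℤ) - (m:ℤ) - (j:ℤ))) • ((opA k V e)^j) x := by
  induction j generalizing q x with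
  | zero =>
    rw [pow_one, pow_zero, Module.End.one_apply]
    have h : opB k V e (opA k V e x)
        = opA k V e (opB k V e x) - ((m:ℤ)-(q:ℤ)) • x := by
      rw [base_identity k V e q x hx]; abel
    rw [h, sub_eq_add_neg, ← neg_smul]
    congr 1
    push_cast
    ring
  | succ j ih =>
    by_cases hq : q ≤ 1
    · have hA0 : opA k V e x = 0 := opA_low k V e q hq x hx
      have h1 : ((opA k V e)^(j+1+1)) x = 0 := by
        rw [pow_apply_succ k V (opA k V e) (j+1) x, hA0, map_zero]
      have h2 : ((opA k V e)^(j+1)) x = 0 := by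
        rw [pow_apply_succ k V (opA k V e) j x, hA0, map_zero]
      have h3 : ((opA k V e)^(j+1+1)) (opB k V e x) = 0 := by
        rw [pow_apply_succ k V (opA k V e) (j+1) (opB k V e x),
          base_identity k V e q x hx, hA0, map_zero, zero_add, map_zsmul, h2, smul_zero]
      rw [h1, h2, h3, map_zero, smul_zero, add_zero]
    · obtain ⟨q', rfl⟩ : ∃ q', q = q'+2 := ⟨q-2, by omega⟩
      have hAx : opA k V e x ∈ Λp q' := opA_mem k V e q' x hx
      have ihh := ih q' (opA k V e x) hAx
      have hb : opB k V e (opA k V e x)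
          = opA k V e (opB k V e x) - ((m:ℤ)-((q'+2 : ℕ):ℤ)) • x := by
        rw [base_identity k V e (q'+2) x hx]; abel
      rw [pow_apply_succ k V (opA k V e) (j+1) x, ihh, hb, map_sub, map_zsmul,
        ← pow_apply_succ k V (opA k V e) (j+1) (opB k V e x),
        ← pow_apply_succ k V (opA k V e) j x,
        sub_eq_add_neg, ← neg_smul, add_assoc, ← add_smul]
      congr 1
      push_cast
      ring

section CharZ
variable [CharZero k]

lemma zsmul_cancel {z : ℤ} (hz : z ≠ 0) {x : Λ} (h : z • x = 0) : x = 0 := by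
  rw [← Int.cast_smul_eq_zsmul k, smul_eq_zero] at h
  rcases h with h | h
  · exact absurd (by exact_mod_cast h) hz
  · exact h

lemma prim_inj (j p : ℕ) (hj : p + j ≤ m) (x : Λ) (hx : x ∈ Λp p)
    (hprim : opA k V e x = 0) (h : ((opB k V e)^j) x = 0) : x = 0 := by
  induction j with
  | zero => simpa using h
  | succ j ih =>
    have hc := commAB k V e j p x hx
    rw [h, map_zero, hprim, map_zero, zero_add] at hc
    have hcoef : (((j:ℤ)+1) * ((m:ℤ) - (p:ℤ) - (j:ℤ))) ≠ 0 := by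
      have h1 : (0:ℤ) < (j:ℤ)+1 := by positivity
      have h2 : (0:ℤ) < (m:ℤ) - (p:ℤ) - (j:ℤ) := by omega
      exact ne_of_gt (mul_pos h1 h2)
    exact ih (by omega) (zsmul_cancel k V hcoef hc.symm)

lemma coprim_inj (j q : ℕ) (hj : m + j ≤ q) (x : Λ) (hx : x ∈ Λp q)
    (hprim : opB k V e x = 0) (h : ((opA k V e)^j) x = 0) : x = 0 := by
  induction j with
  | zero => simpa using h
  | succ j ih =>
    have hc := commBA k V e j q x hx
    rw [h, map_zero, hprim, map_zero, zero_add] at hc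
    have hcoef : (((j:ℤ)+1) * ((q:ℤ) - (m:ℤ) - (j:ℤ))) ≠ 0 := by
      have h1 : (0:ℤ) < (j:ℤ)+1 := by positivity
      have h2 : (0:ℤ) < (q:ℤ) - (m:ℤ) - (j:ℤ) := by omega
      exact ne_of_gt (mul_pos h1 h2)
    exact ih (by omega) (zsmul_cancel k V hcoef hc.symm)

lemma opB_pow_inj (p : ℕ) : p ≤ m → ∀ x, x ∈ (Λp p) → ((opB k V e)^(m-p)) x = 0 → x = 0 := by
  induction p using Nat.strong_induction_on with
  | _ p IH =>
    intro hp x hx h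
    by_cases hp1 : p ≤ 1
    · exact prim_inj k V e (m-p) p (by omega) x hx (opA_low k V e p hp1 x hx) h
    · obtain ⟨p', rfl⟩ : ∃ p', p = p'+2 := ⟨p-2, by omega⟩
      have hAx : opA k V e x ∈ Λp p' := opA_mem k V e p' x hx
      have hz1 : ((opB k V e)^(m-(p'+2)+1+1)) x = 0 := by
        rw [show m-(p'+2)+1+1 = 2+(m-(p'+2)) from by omega, pow_add, Module.End.mul_apply, h,
          map_zero]
      have hz2 : ((opB k V e)^(m-(p'+2)+1)) x = 0 := by
        rw [show m-(p'+2)+1 = 1+(m-(p'+2)) from by omega, pow_add, Module.End.mul_apply, h,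
          map_zero]
      have hc := commAB k V e (m-(p'+2)+1) (p'+2) x hx
      rw [hz1, map_zero, hz2, smul_zero, add_zero] at hc
      have hBAx : ((opB k V e)^(m-p')) (opA k V e x) = 0 := by
        rw [show m-p' = m-(p'+2)+1+1 from by omega]
        exact hc.symm
      have hA0 : opA k V e x = 0 := IH p' (by omega) (by omega) _ hAx hBAx
      exact prim_inj k V e (m-(p'+2)) (p'+2) (by omega) x hx hA0 h

include e in
lemma high_vanish (q : ℕ) (hq : 2*m < q) (x : Λ) (hx : x ∈ Λp q) : x = 0 := by
  have hfin : Module.Finite k (Module.Dual k V) := Module.Finite.of_basis e.dualBasis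
  rw [← ExteriorAlgebra.ιMulti_span_fixedDegree] at hx
  induction hx using Submodule.span_induction with
  | mem y hy =>
    obtain ⟨f, rfl⟩ := hy
    refine AlternatingMap.map_linearDependent (ExteriorAlgebra.ιMulti k q) f fun hli => ?_
    have hcard := hli.fintype_card_le_finrank
    rw [Module.finrank_eq_card_basis e.dualBasis] at hcard
    simp only [Fintype.card_fin, Fintype.card_sum] at hcard
    omega
  | zero => rfl
  | add y z _ _ hy hz => rw [hy, hz, add_zero]
  | smul c y _ hy => rw [hy, smul_zero]

lemma opA_pow_inj (t : ℕ) : ∀ q, m ≤ q → 2*m ≤ q + t → ∀ x, x ∈ (Λp q) →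
    ((opA k V e)^(q-m)) x = 0 → x = 0 := by
  induction t using Nat.strong_induction_on with
  | _ t IH =>
    intro q hq ht x hx h
    by_cases hhigh : 2*m < q + 2
    · have hBx0 : opB k V e x = 0 :=
        high_vanish k V e (q+2) (by omega) _ (opB_mem k V e q x hx)
      exact coprim_inj k V e (q-m) q (by omega) x hx hBx0 h
    · have hBx : opB k V e x ∈ Λp (q+2) := opB_mem k V e q x hx
      have hz1 : ((opA k V e)^(q-m+1+1)) x = 0 := by
        rw [show q-m+1+1 = 2+(q-m) from by omega, pow_add, Module.End.mul_apply, h, map_zero]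
      have hz2 : ((opA k V e)^(q-m+1)) x = 0 := by
        rw [show q-m+1 = 1+(q-m) from by omega, pow_add, Module.End.mul_apply, h, map_zero]
      have hc := commBA k V e (q-m+1) q x hx
      rw [hz1, map_zero, hz2, smul_zero, add_zero] at hc
      have hzB : ((opA k V e)^(q+2-m)) (opB k V e x) = 0 := by
        rw [show q+2-m = q-m+1+1 from by omega]
        exact hc.symm
      have hB0 : opB k V e x = 0 :=
        IH (t-2) (by omega) (q+2) (by omega) (by omega) _ hBx hzB
      exact coprim_inj k V e (q-m) q (by omega) x hx hB0 h

end CharZ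

end Aux

theorem stmt13 [CharZero k] (i : ℕ) (hi : i ≤ m) :
    Set.BijOn (((opA k V e : Module.End k (ExteriorAlgebra k (Module.Dual k V))) ^ i : Module.End k (ExteriorAlgebra k (Module.Dual k V))))
      (⋀[k]^(m + i) (Module.Dual k V) : Set (ExteriorAlgebra k (Module.Dual k V)))
      (⋀[k]^(m - i) (Module.Dual k V) : Set (ExteriorAlgebra k (Module.Dual k V))) := by
    classical
  have hfinM : Module.Finite k (Module.Dual k V) := Module.Finite.of_basis e.dualBasis
  have hfg : ∀ n : ℕ, (⋀[k]^n (Module.Dual k V) :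
      Submodule k (ExteriorAlgebra k (Module.Dual k V))).FG := by
    intro n
    refine Submodule.FG.pow ?_ n
    rw [LinearMap.range_eq_map]
    exact Submodule.FG.map _ (Module.finite_def.mp hfinM)
  have hfd : ∀ n : ℕ, FiniteDimensional k
      (⋀[k]^n (Module.Dual k V) : Submodule k (ExteriorAlgebra k (Module.Dual k V))) := by
    intro n
    exact (Submodule.fg_iff_finiteDimensional _).mp (hfg n)
  have hmem : ∀ x ∈ (⋀[k]^(m + i) (Module.Dual k V) :
      Submodule k (ExteriorAlgebra k (Module.Dual k V))),
      ((opA k V e)^i) x ∈ (⋀[k]^(m - i) (Module.Dual k V) :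
        Submodule k (ExteriorAlgebra k (Module.Dual k V))) := by
    intro x hx
    refine opA_pow_mem k V e i (m-i) x ?_
    rwa [show m-i+2*i = m+i from by omega]
  have hmemB : ∀ x ∈ (⋀[k]^(m - i) (Module.Dual k V) :
      Submodule k (ExteriorAlgebra k (Module.Dual k V))),
      ((opB k V e)^i) x ∈ (⋀[k]^(m + i) (Module.Dual k V) :
        Submodule k (ExteriorAlgebra k (Module.Dual k V))) := by
    intro x hx
    have := opB_pow_mem k V e i (m-i) x hx
    rwa [show m-i+2*i = m+i from by omega] at this
  have hinj : ∀ x ∈ (⋀[k]^(m + i) (Module.Dual k V) :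
      Submodule k (ExteriorAlgebra k (Module.Dual k V))),
      ((opA k V e)^i) x = 0 → x = 0 := by
    intro x hx hx0
    refine opA_pow_inj k V e m (m+i) (by omega) (by omega) x hx ?_
    rwa [show m+i-m = i from by omega]
  have hinjB : ∀ x ∈ (⋀[k]^(m - i) (Module.Dual k V) :
      Submodule k (ExteriorAlgebra k (Module.Dual k V))),
      ((opB k V e)^i) x = 0 → x = 0 := by
    intro x hx hx0
    refine opB_pow_inj k V e (m-i) (by omega) x hx ?_
    rwa [show m-(m-i) = i from by omega]
  set W1 := (⋀[k]^(m + i) (Module.Dual k V) :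
      Submodule k (ExteriorAlgebra k (Module.Dual k V)))
  set W2 := (⋀[k]^(m - i) (Module.Dual k V) :
      Submodule k (ExteriorAlgebra k (Module.Dual k V)))
  haveI : FiniteDimensional k W1 := hfd (m+i)
  haveI : FiniteDimensional k W2 := hfd (m-i)
  let F : W1 →ₗ[k] W2 := ((opA k V e)^i).restrict hmem
  let G : W2 →ₗ[k] W1 := ((opB k V e)^i).restrict hmemB
  have hFinj : Function.Injective F := by
    rw [injective_iff_map_eq_zero]
    rintro ⟨x, hx⟩ hFx
    have : ((opA k V e)^i) x = 0 := congrArg Subtype.val hFx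
    exact Subtype.ext (hinj x hx this)
  have hGinj : Function.Injective G := by
    rw [injective_iff_map_eq_zero]
    rintro ⟨x, hx⟩ hGx
    have : ((opB k V e)^i) x = 0 := congrArg Subtype.val hGx
    exact Subtype.ext (hinjB x hx this)
  have hrank : Module.finrank k W1 = Module.finrank k W2 :=
    le_antisymm (LinearMap.finrank_le_finrank_of_injective hFinj)
      (LinearMap.finrank_le_finrank_of_injective hGinj)
  have hFsurj : Function.Surjective F :=
    (LinearMap.injective_iff_surjective_of_finrank_eq_finrank hrank).mp hFinj
  refine ⟨fun x hx => hmem x hx, ?_, ?_⟩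
  · intro x hx y hy hxy
    have hsub : x - y ∈ W1 := sub_mem hx hy
    have h0 : ((opA k V e)^i) (x - y) = 0 := by
      rw [map_sub]
      simpa using sub_eq_zero.mpr hxy
    exact sub_eq_zero.mp (hinj _ hsub h0)
  · intro y hy
    obtain ⟨⟨x, hx⟩, hFx⟩ := hFsurj ⟨y, hy⟩
    exact ⟨x, hx, congrArg Subtype.val hFx⟩
end

section
/- Let $V$ be an $(n+1)$-dimensional vector space over a field $k$ with basis $e_0,\dots,e_n$, and let $H \subseteq \Lambda^2 V$ be the subspace spanned by the elements $w_{ij} = e_i \wedge e_j - e_0 \wedge e_{i+j}$ for $0 < i < j < n$ with $i+j \le n$, and $w_{ij} = e_i \wedge e_j - e_{i+j-n} \wedge e_n$ for $0 < i < j < n$ with $i+j > n$. Then $\dim H = \binom{n-1}{2}$, and $H$ intersects the set of decomposable 2-vectors $\{v \wedge w : v, w \in V\}$ only in $0$. -/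
/-!
STATEMENT 15: Let `V` be `(n+1)`-dimensional with basis `e₀,…,e_n` (`n ≥ 3`), and let
`H ⊆ Λ²V` be spanned by the elements
`w_{ij} = eᵢ ∧ eⱼ - e₀ ∧ e_{i+j}` for `0 < i < j < n`, `i+j ≤ n`, and
`w_{ij} = eᵢ ∧ eⱼ - e_{i+j-n} ∧ e_n` for `0 < i < j < n`, `i+j > n`.
Then `dim H = binom(n-1, 2)` and `H` meets the set of decomposable 2-vectors
`{v ∧ w : v, w ∈ V}` only in `0`.
Indices are natural numbers `≤ n`, coerced into `Fin (n+1)` (the coercion is reduction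
mod `n+1`, which agrees with the inclusion for indices `≤ n`).
-/

open ExteriorAlgebra
open Fin.NatCast

noncomputable def wel (k V : Type) [Field k] [AddCommGroup V] [Module k V] (n : ℕ)
    (e : Module.Basis (Fin (n + 1)) k V) (i j : ℕ) : ExteriorAlgebra k V :=
  if i + j ≤ n then
    ι k (e i) * ι k (e j) - ι k (e 0) * ι k (e (i + j))
  else
    ι k (e i) * ι k (e j) - ι k (e (i + j - n)) * ι k (e n)

/-
The functional `e_a^* ∧ e_b^*` with `0 < a < b < n` takes the value `1` on `w_ab` and `0` on every
other generator, because the second term of a generator involves `e_0` or `e_n`; hence the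
generators are independent. Each generator is a difference of two basis bivectors with the same
index sum, so `H` is killed by every `L_m = ∑_{a < b, a + b = m} e_a^* ∧ e_b^*`. On `v ∧ w` the
value of `L_m` is the `m`-th antidiagonal sum of the `2 × 2` minors of the coefficient vectors.
If `A` is the largest index where `v` or `w` is nonzero, say `v_A ≠ 0`, subtracting a multiple of
`v` from `w` makes `w_A = 0`; if `w` is still nonzero with top index `C < A`, then
`L_{A+C}(v ∧ w) = -v_A w_C ≠ 0`. So `w` is a multiple of `v`.
-/

open Finset

section BivectorPairing

variable {R M : Type*} [CommRing R] [AddCommGroup M] [Module R M]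

noncomputable def wedgeForm (f g : Module.Dual R M) : M [⋀^Fin 2]→ₗ[R] R where
  toMultilinearMap := (MultilinearMap.mkPiAlgebra R (Fin 2) R).compLinearMap ![f, g]
    - (MultilinearMap.mkPiAlgebra R (Fin 2) R).compLinearMap ![g, f]
  map_eq_zero_of_eq' v i j hij hne := by
    fin_cases i <;> fin_cases j <;> simp_all [Fin.prod_univ_two, mul_comm]

theorem wedgeForm_apply (f g : Module.Dual R M) (v w : M) :
    wedgeForm f g ![v, w] = f v * g w - g v * f w := by
  simp [wedgeForm, Fin.prod_univ_two]

noncomputable def bivectorPairing (f g : Module.Dual R M) : ExteriorAlgebra R M →ₗ[R] R :=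
  liftAlternating fun | 2 => wedgeForm f g | _ => 0

theorem bivectorPairing_ι_mul_ι (f g : Module.Dual R M) (v w : M) :
    bivectorPairing f g (ι R v * ι R w) = f v * g w - g v * f w := by
  rw [bivectorPairing, liftAlternating_ι_mul, liftAlternating_ι]
  exact wedgeForm_apply f g v w

end BivectorPairing

section AntidiagMinorSum

variable {R : Type*} [CommRing R]

def antidiagMinorSum (v w : ℕ →₀ R) (m : ℕ) : R :=
  ∑ p ∈ antidiagonal m with p.1 < p.2, (v p.1 * w p.2 - v p.2 * w p.1)

theorem antidiagMinorSum_comm (v w : ℕ →₀ R) (m : ℕ) :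
    antidiagMinorSum w v m = -antidiagMinorSum v w m := by
  rw [antidiagMinorSum, antidiagMinorSum, ← sum_neg_distrib]
  exact sum_congr rfl fun _ _ => by ring

theorem antidiagMinorSum_sub_smul (v w : ℕ →₀ R) (c : R) (m : ℕ) :
    antidiagMinorSum v (w - c • v) m = antidiagMinorSum v w m := by
  simp only [antidiagMinorSum, Finsupp.coe_sub, Finsupp.coe_smul, Pi.sub_apply, Pi.smul_apply,
    smul_eq_mul]
  exact sum_congr rfl fun _ _ => by ring

theorem eq_zero_of_antidiagMinorSum_eq_zero [NoZeroDivisors R] {v w : ℕ →₀ R} {A : ℕ}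
    (hvA : v A ≠ 0) (hwA : w A = 0) (hv : ∀ i, A < i → v i = 0) (hw : ∀ i, A < i → w i = 0)
    (hS : ∀ m, antidiagMinorSum v w m = 0) : w = 0 := by
  by_contra hw0
  set C := w.support.max' (Finsupp.support_nonempty_iff.mpr hw0)
  have hwC : w C ≠ 0 := Finsupp.mem_support_iff.mp (max'_mem _ _)
  have hwC' : ∀ j, C < j → w j = 0 := fun j hj =>
    Finsupp.notMem_support_iff.mp fun h => (le_max' _ j h).not_gt hj
  have hCA : C < A := lt_of_le_of_ne (not_lt.mp fun h => hwC (hw C h)) fun h => hwC (h ▸ hwA)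
  -- among the pairs `a < b` with `a + b = C + A`, only `(C, A)` avoids a zero coordinate
  have hsum : antidiagMinorSum v w (C + A) = -(v A * w C) := by
    rw [antidiagMinorSum, sum_eq_single_of_mem (C, A) (by simp [hCA])]
    · simp [hwA]
    · rintro ⟨a, b⟩ hab hne
      simp only [mem_filter, HasAntidiagonal.mem_antidiagonal] at hab
      rcases lt_trichotomy b A with hb | rfl | hb
      · rw [hwC' a (by omega), hwC' b (by omega)]; ring
      · exact (hne (Prod.ext (by omega) rfl)).elim
      · rw [hv b hb, hw b hb]; ring
  exact mul_ne_zero hvA hwC (neg_eq_zero.mp (hsum ▸ hS _))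

theorem eq_smul_of_antidiagMinorSum_eq_zero {K : Type*} [Field K] {v w : ℕ →₀ K} {A : ℕ}
    (hvA : v A ≠ 0) (hv : ∀ i, A < i → v i = 0) (hw : ∀ i, A < i → w i = 0)
    (hS : ∀ m, antidiagMinorSum v w m = 0) : w = (w A / v A) • v := by
  rw [← sub_eq_zero]
  refine eq_zero_of_antidiagMinorSum_eq_zero hvA (by simp [hvA]) hv
    (fun i hi => by simp [hv i hi, hw i hi]) fun m => by rw [antidiagMinorSum_sub_smul, hS]

theorem exists_smul_of_antidiagMinorSum_eq_zero {K : Type*} [Field K] (v w : ℕ →₀ K)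
    (hS : ∀ m, antidiagMinorSum v w m = 0) : ∃ c : K, w = c • v ∨ v = c • w := by
  classical
  obtain hs | hs := (v.support ∪ w.support).eq_empty_or_nonempty
  · exact ⟨0, Or.inr (by simp_all)⟩
  set A := (v.support ∪ w.support).max' hs
  have hA : v A ≠ 0 ∨ w A ≠ 0 := by simpa using max'_mem _ hs
  have hgt : ∀ i, A < i → v i = 0 ∧ w i = 0 := fun i hi => by
    simpa using mt (le_max' _ i) hi.not_ge
  rcases hA with hvA | hwA
  · exact ⟨_, Or.inl (eq_smul_of_antidiagMinorSum_eq_zero hvA (fun i hi => (hgt i hi).1)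
      (fun i hi => (hgt i hi).2) hS)⟩
  · exact ⟨_, Or.inr (eq_smul_of_antidiagMinorSum_eq_zero hwA (fun i hi => (hgt i hi).2)
      (fun i hi => (hgt i hi).1) fun m => by rw [antidiagMinorSum_comm, hS, neg_zero])⟩

end AntidiagMinorSum

section BasisCoordinates

variable {R V : Type*} [CommRing R] [AddCommGroup V] [Module R V] {n : ℕ}
  (e : Module.Basis (Fin (n + 1)) R V)

-- Coordinates indexed by `ℕ` rather than `Fin (n + 1)`, so that index sums do not wrap around.
noncomputable def natCoeffs : V →ₗ[R] ℕ →₀ R :=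
  Finsupp.lmapDomain R R Fin.val ∘ₗ e.repr.toLinearMap

theorem natCoeffs_injective : Function.Injective (natCoeffs e) :=
  (Finsupp.mapDomain_injective Fin.val_injective).comp e.repr.injective

theorem natCoeffs_basis {c : ℕ} (hc : c ≤ n) : natCoeffs e (e c) = Finsupp.single c 1 := by
  simp [natCoeffs, Finsupp.mapDomain_single, Fin.val_cast_of_lt (Nat.lt_succ_of_le hc)]

noncomputable def bivectorCoord (a b : ℕ) : ExteriorAlgebra R V →ₗ[R] R :=
  bivectorPairing (Finsupp.lapply a ∘ₗ natCoeffs e) (Finsupp.lapply b ∘ₗ natCoeffs e)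

theorem bivectorCoord_ι_mul_ι (a b : ℕ) (v w : V) :
    bivectorCoord e a b (ι R v * ι R w) =
      natCoeffs e v a * natCoeffs e w b - natCoeffs e v b * natCoeffs e w a :=
  bivectorPairing_ι_mul_ι _ _ v w

theorem bivectorCoord_basis {a b c d : ℕ} (hab : a < b) (hcd : c < d) (hd : d ≤ n) :
    bivectorCoord e a b (ι R (e c) * ι R (e d)) = if (c, d) = (a, b) then 1 else 0 := by
  rw [bivectorCoord_ι_mul_ι, natCoeffs_basis e (by omega), natCoeffs_basis e hd]
  simp only [Finsupp.single_apply, Prod.mk.injEq]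
  split_ifs <;> first | omega | simp

noncomputable def antidiagCoord (m : ℕ) : ExteriorAlgebra R V →ₗ[R] R :=
  ∑ p ∈ antidiagonal m with p.1 < p.2, bivectorCoord e p.1 p.2

theorem antidiagCoord_ι_mul_ι (m : ℕ) (v w : V) :
    antidiagCoord e m (ι R v * ι R w) = antidiagMinorSum (natCoeffs e v) (natCoeffs e w) m := by
  rw [antidiagCoord, LinearMap.sum_apply, antidiagMinorSum]
  exact sum_congr rfl fun p _ => bivectorCoord_ι_mul_ι e p.1 p.2 v w

theorem antidiagCoord_basis (m : ℕ) {c d : ℕ} (hcd : c < d) (hd : d ≤ n) :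
    antidiagCoord e m (ι R (e c) * ι R (e d)) = if c + d = m then 1 else 0 := by
  rw [antidiagCoord, LinearMap.sum_apply,
    sum_congr rfl fun p hp => bivectorCoord_basis e (mem_filter.mp hp).2 hcd hd, sum_ite_eq]
  simp [hcd]

end BasisCoordinates

theorem ι_mul_ι_eq_zero_of_antidiagCoord_eq_zero {K V : Type*} [Field K] [AddCommGroup V]
    [Module K V] {n : ℕ} (e : Module.Basis (Fin (n + 1)) K V) {v w : V}
    (h : ∀ m, antidiagCoord e m (ι K v * ι K w) = 0) : ι K v * ι K w = 0 := by
  simp only [antidiagCoord_ι_mul_ι] at h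
  obtain ⟨c, hc | hc⟩ := exists_smul_of_antidiagMinorSum_eq_zero _ _ h
  · rw [natCoeffs_injective e (hc.trans (map_smul _ c v).symm)]
    simp
  · rw [natCoeffs_injective e (hc.trans (map_smul _ c w).symm)]
    simp

def welIndices (n : ℕ) : Finset (ℕ × ℕ) :=
  {p ∈ Ioo 0 n ×ˢ Ioo 0 n | p.1 < p.2}

theorem mem_welIndices {n : ℕ} {p : ℕ × ℕ} :
    p ∈ welIndices n ↔ 0 < p.1 ∧ p.1 < p.2 ∧ p.2 < n := by
  simp only [welIndices, mem_filter, mem_product, mem_Ioo]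
  omega

theorem card_welIndices (n : ℕ) : #(welIndices n) = (n - 1).choose 2 := by
  rw [welIndices, card_product_filter_lt, Nat.card_Ioo, Nat.sub_zero]

section Wel

variable {k V : Type} [Field k] [AddCommGroup V] [Module k V] {n : ℕ}
  (e : Module.Basis (Fin (n + 1)) k V)

theorem wel_eq_sub {i j : ℕ} (hij : i < j) (hj : j ≤ n) :
    ∃ c d, c < d ∧ d ≤ n ∧ c + d = i + j ∧ (c = 0 ∨ d = n) ∧
      wel k V n e i j = ι k (e i) * ι k (e j) - ι k (e c) * ι k (e d) := by
  unfold wel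
  split_ifs with h
  · exact ⟨0, i + j, by omega, h, by omega, Or.inl rfl, by rw [Nat.cast_add, Nat.cast_zero]⟩
  · refine ⟨i + j - n, n, by omega, le_rfl, by omega, Or.inr rfl, ?_⟩
    have hcast : (i + j - n : Fin (n + 1)) = ((i + j - n : ℕ) : Fin (n + 1)) := by
      rw [sub_eq_iff_eq_add, ← Nat.cast_add, ← Nat.cast_add, Nat.sub_add_cancel (by omega)]
    rw [hcast]

theorem antidiagCoord_wel (m : ℕ) {i j : ℕ} (hij : i < j) (hj : j ≤ n) :
    antidiagCoord e m (wel k V n e i j) = 0 := by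
  obtain ⟨c, d, hcd, hd, hsum, -, hw⟩ := wel_eq_sub e hij hj
  rw [hw, map_sub, antidiagCoord_basis e m hij hj, antidiagCoord_basis e m hcd hd, hsum, sub_self]

theorem bivectorCoord_wel {a b i j : ℕ} (ha : 0 < a) (hab : a < b) (hb : b < n)
    (hij : i < j) (hj : j < n) :
    bivectorCoord e a b (wel k V n e i j) = if (i, j) = (a, b) then 1 else 0 := by
  obtain ⟨c, d, hcd, hd, -, hcd0, hw⟩ := wel_eq_sub e hij hj.le
  have hne : (c, d) ≠ (a, b) := by simp only [ne_eq, Prod.mk.injEq]; omega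
  rw [hw, map_sub, bivectorCoord_basis e hab hij hj.le, bivectorCoord_basis e hab hcd hd,
    if_neg hne, sub_zero]

theorem setOf_wel_eq_image :
    {x | ∃ i j : ℕ, 0 < i ∧ i < j ∧ j < n ∧ x = wel k V n e i j} =
      (fun p : ℕ × ℕ => wel k V n e p.1 p.2) '' welIndices n := by
  ext x
  simp only [Set.mem_ofPred_eq, Set.mem_image, mem_coe, mem_welIndices, Prod.exists]
  grind

theorem linearIndependent_wel :
    LinearIndependent k fun p : (welIndices n : Set (ℕ × ℕ)) => wel k V n e p.1.1 p.1.2 := by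
  have hcoord : ∀ p q : (welIndices n : Set (ℕ × ℕ)),
      bivectorCoord e p.1.1 p.1.2 (wel k V n e q.1.1 q.1.2) = if q.1 = p.1 then 1 else 0 := by
    rintro ⟨⟨a, b⟩, hp⟩ ⟨⟨i, j⟩, hq⟩
    obtain ⟨ha, hab, hb⟩ := mem_welIndices.mp hp
    obtain ⟨-, hij, hj⟩ := mem_welIndices.mp hq
    exact bivectorCoord_wel e ha hab hb hij hj
  refine .of_pairwise_dual_eq_zero_one _ (fun p => bivectorCoord e p.1.1 p.1.2)
    (fun p q hpq => ?_) fun p => ?_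
  · exact (hcoord p q).trans (if_neg (Subtype.coe_injective.ne hpq.symm))
  · exact (hcoord p p).trans (if_pos rfl)

theorem span_wel_le_ker_antidiagCoord (m : ℕ) :
    Submodule.span k ((fun p : ℕ × ℕ => wel k V n e p.1 p.2) '' welIndices n) ≤
      LinearMap.ker (antidiagCoord e m) := by
  rw [Submodule.span_le]
  rintro _ ⟨p, hp, rfl⟩
  obtain ⟨-, hp12, hp2⟩ := mem_welIndices.mp hp
  exact antidiagCoord_wel e m hp12 hp2.le

end Wel

theorem stmt15_general (k V : Type) [Field k] [AddCommGroup V] [Module k V]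
    (n : ℕ) (e : Module.Basis (Fin (n + 1)) k V) :
    let H : Submodule k (ExteriorAlgebra k V) :=
      Submodule.span k {x | ∃ i j : ℕ, 0 < i ∧ i < j ∧ j < n ∧ x = wel k V n e i j}
    Module.finrank k H = (n - 1).choose 2 ∧
      ∀ x ∈ H, (∃ v w : V, x = ι k v * ι k w) → x = 0 := by
  rw [setOf_wel_eq_image]
  refine ⟨?_, ?_⟩
  · rw [Set.image_eq_range, finrank_span_eq_card (linearIndependent_wel e)]
    simp only [Finset.coe_sort_coe, Fintype.card_coe, card_welIndices]
  · rintro x hx ⟨v, w, rfl⟩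
    exact ι_mul_ι_eq_zero_of_antidiagCoord_eq_zero e fun m => span_wel_le_ker_antidiagCoord e m hx

theorem stmt15 (k V : Type) [Field k] [AddCommGroup V] [Module k V]
    (n : ℕ) (hn : 3 ≤ n) (e : Module.Basis (Fin (n + 1)) k V) :
    let H : Submodule k (ExteriorAlgebra k V) :=
      Submodule.span k {x | ∃ i j : ℕ, 0 < i ∧ i < j ∧ j < n ∧ x = wel k V n e i j}
    Module.finrank k H = (n - 1).choose 2 ∧
      ∀ x ∈ H, (∃ v w : V, x = ι k v * ι k w) → x = 0 :=
  stmt15_general k V n e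
end
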